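/- arXiv:math/0304502 — 5 statements merged into one kernel-verified Lean document; each statement's English description precedes it below -/
import Mathlib

section
/- Conversely, let D ⊆ Z/vZ with |D| = k, and suppose θ(ζ)·conj(θ(ζ)) = k - λ for every v-th root of unity ζ ≠ 1, where θ(x) = Σ_{d∈D} x^d and (v-1)λ = k(k-1). Then D is a (v,k,λ) difference set. -/
open Polynomial Finset

private lemma pow_mod_eq {ω : ℂ} {v : ℕ} (hω : ω ^ v = 1) (m : ℕ) :
    ω ^ m = ω ^ (m % v) := by
  conv_lhs => rw [← Nat.mod_add_div m v, pow_add, pow_mul, hω, one_pow, mul_one]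

theorem hall_polynomial_converse (v k l : ℕ) [NeZero v]
    (D : Finset (ZMod v))
    (hcard : D.card = k)
    (hcount : (v - 1) * l = k * (k - 1))
    (hroots : ∀ ζ : ℂ, ζ ^ v = 1 → ζ ≠ 1 →
      (∑ d ∈ D, ζ ^ d.val) * (starRingEnd ℂ) (∑ d ∈ D, ζ ^ d.val)
        = (k : ℂ) - (l : ℂ)) :
    ∀ g : ZMod v, g ≠ 0 →
      ((D ×ˢ D).filter (fun p => p.1 - p.2 = g)).card = l := by
  intro g hg
  have hv : 0 < v := Nat.pos_of_ne_zero (NeZero.ne v)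
  -- the polynomial
  set p : ℂ[X] := (∑ x ∈ D ×ˢ D, X ^ (x.1 - x.2).val) - C ((k : ℂ) - l)
      - C (l : ℂ) * ∑ j ∈ range v, X ^ j with hp
  -- key identity: for any v-th root of unity ω, eval ω p = 0
  have heval : ∀ ω : ℂ, ω ^ v = 1 → p.eval ω = 0 := by
    intro ω hω
    have hω0 : ω ≠ 0 := by
      intro h; rw [h, zero_pow hv.ne'] at hω; exact zero_ne_one hω
    simp only [hp, eval_sub, eval_mul, eval_C, eval_finset_sum, eval_pow, eval_X]
    by_cases h1 : ω = 1
    · subst h1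
      simp only [one_pow, sum_const, nsmul_eq_mul, mul_one, card_product, hcard,
        Finset.card_range]
      have hk2 : (k : ℂ) * k - ((k : ℂ) - l) - l * v = 0 := by
        have : ((v : ℂ) - 1) * l = (k : ℂ) * (k - 1) := by
          rcases Nat.eq_zero_or_pos k with hk | hk
          · subst hk
            simp only [Nat.zero_mul, Nat.mul_zero, Nat.zero_sub] at hcount
            have h0 : (v - 1) * l = 0 := by omega
            rcases Nat.mul_eq_zero.mp h0 with h | h
            · have hv1 : v = 1 := by omega
              simp [hv1]
            · simp [h]
          · have h1 : ((v - 1 : ℕ) : ℂ) * l = ((k : ℕ) : ℂ) * ((k - 1 : ℕ) : ℂ) := by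
              exact_mod_cast congrArg (Nat.cast : ℕ → ℂ) hcount
            rwa [Nat.cast_sub hv, Nat.cast_sub hk, Nat.cast_one] at h1
        ring_nf
        ring_nf at this
        linear_combination -this
      push_cast
      linear_combination hk2
    · -- ω ≠ 1
      have hgeom : ∑ j ∈ range v, ω ^ j = 0 := by
        have := geom_sum_eq h1 v
        rw [this, hω, sub_self, zero_div]
      have hconj : (starRingEnd ℂ) ω * ω = 1 := by
        have hn : ‖ω‖ = 1 := Complex.norm_eq_one_of_pow_eq_one hω (NeZero.ne v)
        rw [mul_comm, Complex.mul_conj, Complex.normSq_eq_norm_sq, hn]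
        norm_num
      have key : ∀ a b : ZMod v, ω ^ (a - b).val
          = ω ^ a.val * ((starRingEnd ℂ) ω) ^ b.val := by
        intro a b
        have h2 : ω ^ (a - b).val * ω ^ b.val = ω ^ a.val := by
          rw [← pow_add, pow_mod_eq hω, ← ZMod.val_add, sub_add_cancel]
        have h3 : ω ^ b.val * ((starRingEnd ℂ) ω) ^ b.val = 1 := by
          rw [← mul_pow, mul_comm ω, hconj, one_pow]
        calc ω ^ (a - b).val = ω ^ (a - b).val * (ω ^ b.val * ((starRingEnd ℂ) ω) ^ b.val) := by
              rw [h3, mul_one]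
          _ = (ω ^ (a - b).val * ω ^ b.val) * ((starRingEnd ℂ) ω) ^ b.val := by ring
          _ = ω ^ a.val * ((starRingEnd ℂ) ω) ^ b.val := by rw [h2]
      have hsum : ∑ x ∈ D ×ˢ D, ω ^ (x.1 - x.2).val
          = (∑ d ∈ D, ω ^ d.val) * (starRingEnd ℂ) (∑ d ∈ D, ω ^ d.val) := by
        rw [map_sum, Finset.sum_mul_sum, Finset.sum_product]
        refine Finset.sum_congr rfl fun a _ => Finset.sum_congr rfl fun b _ => ?_
        rw [key a b, map_pow]
      rw [hsum, hroots ω hω h1, hgeom, mul_zero, sub_zero, sub_self]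
  -- p = 0
  have hpz : p = 0 := by
    obtain ⟨ζ, hζ⟩ : ∃ ζ : ℂ, IsPrimitiveRoot ζ v :=
      ⟨Complex.exp (2 * Real.pi * Complex.I / v), Complex.isPrimitiveRoot_exp v (NeZero.ne v)⟩
    apply eq_zero_of_natDegree_lt_card_of_eval_eq_zero p
      (f := fun i : ZMod v => ζ ^ i.val)
      (fun a b hab => ZMod.val_injective v
        (hζ.pow_inj (ZMod.val_lt a) (ZMod.val_lt b) hab))
    · intro i
      exact heval _ (by rw [← pow_mul, mul_comm, pow_mul, hζ.pow_eq_one, one_pow])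
    · rw [ZMod.card]
      refine lt_of_le_of_lt (natDegree_sub_le _ _) (max_lt (lt_of_le_of_lt
        (natDegree_sub_le _ _) (max_lt ?_ ?_)) ?_)
      · refine lt_of_le_of_lt (natDegree_sum_le _ _) ?_
        rcases Finset.eq_empty_or_nonempty (D ×ˢ D) with h | h
        · simp [h, hv]
        · rw [Finset.fold_max_lt]
          exact ⟨hv, fun x _ => lt_of_le_of_lt (natDegree_X_pow_le _) (ZMod.val_lt _)⟩
      · exact lt_of_le_of_lt (natDegree_C _).le hv
      · refine lt_of_le_of_lt (natDegree_mul_le) ?_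
        rw [natDegree_C, zero_add]
        refine lt_of_le_of_lt (natDegree_sum_le _ _) ?_
        rcases Nat.eq_zero_or_pos v with h | h
        · omega
        · rw [Finset.fold_max_lt]
          constructor
          · exact hv
          · intro j hj
            exact lt_of_le_of_lt (natDegree_X_pow_le _) (Finset.mem_range.mp hj)
  -- extract coefficient at g.val
  have hcoeff := congrArg (fun q : ℂ[X] => q.coeff g.val) hpz
  simp only [hp, coeff_sub, coeff_zero, finset_sum_coeff, coeff_X_pow, coeff_C,
    coeff_C_mul] at hcoeff
  have hgv : g.val ≠ 0 := fun h => hg (ZMod.val_injective v (by simpa using h))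
  rw [if_neg hgv] at hcoeff
  have hrange : (∑ x ∈ range v, if g.val = x then (1:ℂ) else 0) = 1 := by
    rw [Finset.sum_ite_eq (range v) g.val (fun _ => (1:ℂ)),
      if_pos (Finset.mem_range.mpr (ZMod.val_lt g))]
  have hceq : ∀ x : ZMod v × ZMod v, (g.val = (x.1 - x.2).val) ↔ (x.1 - x.2 = g) := fun x =>
    ⟨fun h => ZMod.val_injective v h.symm, fun h => by rw [h]⟩
  have hsum2 : (∑ x ∈ D ×ˢ D, if g.val = (x.1 - x.2).val then (1:ℂ) else 0)
      = (((D ×ˢ D).filter (fun x => x.1 - x.2 = g)).card : ℂ) := by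
    rw [Finset.sum_congr rfl (fun x _ => if_congr (hceq x) rfl rfl), Finset.sum_boole]
  rw [hrange, hsum2] at hcoeff
  have hc : ((((D ×ˢ D).filter (fun x => x.1 - x.2 = g)).card : ℂ)) = l := by
    linear_combination hcoeff
  exact_mod_cast hc
end

section
/- Let D be a (v,k,λ) difference set in Z/vZ, let w > 1 be a divisor of v, and for each i ∈ {0,...,w-1} let b_i = #{d ∈ D : d ≡ i (mod w)}. Then Σ_{i=0}^{w-1} b_i^2 = n + λ·(v/w), where n = k - λ. -/
theorem contracted_counts_sum_sq (v k l w : ℕ) [NeZero v]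
    (D : Finset (ZMod v))
    (hcard : D.card = k)
    (hdiff : ∀ g : ZMod v, g ≠ 0 →
      ((D ×ˢ D).filter (fun p => p.1 - p.2 = g)).card = l)
    (hw : w ∣ v) (hw1 : 1 < w) :
    ∑ i ∈ Finset.range w, ((D.filter (fun d => d.val % w = i)).card : ℤ) ^ 2
      = ((k : ℤ) - l) + l * (v / w : ℕ) := by
  have hv : v ≠ 0 := NeZero.ne v
  have hw0 : 0 < w := by omega
  haveI : NeZero w := ⟨by omega⟩
  set φ : ZMod v →+* ZMod w := ZMod.castHom hw (ZMod w) with hφ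
  have hφval : ∀ a : ZMod v, (φ a).val = a.val % w := by
    intro a
    have h1 : φ a = ((a.val : ℕ) : ZMod w) := by
      simp [hφ, ZMod.castHom_apply, ← ZMod.natCast_val]
    rw [h1, ZMod.val_natCast]
  have hφeq : ∀ a b : ZMod v, φ a = φ b ↔ a.val % w = b.val % w := by
    intro a b
    constructor
    · intro h; rw [← hφval, ← hφval, h]
    · intro h
      have := ZMod.val_injective (n := w)
      exact this (by rw [hφval, hφval, h])
  -- kernel set
  set A : Finset (ZMod v) := Finset.univ.filter (fun g => φ g = 0) with hA
  have hAcard : A.card = v / w := by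
    rw [← Finset.card_range (v / w)]
    apply Finset.card_bij' (fun g _ => g.val / w) (fun j _ => ((j * w : ℕ) : ZMod v))
    · intro g hg
      rw [hA, Finset.mem_filter] at hg
      have hdvd : w ∣ g.val := by
        have := hφval g
        rw [hg.2] at this
        simp [ZMod.val_zero] at this
        omega
      rw [Finset.mem_range]
      exact Nat.div_lt_div_of_lt_of_dvd hw (ZMod.val_lt g)
    · intro j hj
      rw [Finset.mem_range] at hj
      rw [hA, Finset.mem_filter]
      refine ⟨Finset.mem_univ _, ?_⟩
      rw [map_natCast]
      simp [Nat.cast_mul, ZMod.natCast_self]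
    · intro g hg
      rw [hA, Finset.mem_filter] at hg
      have hdvd : w ∣ g.val := by
        have := hφval g
        rw [hg.2] at this
        simp [ZMod.val_zero] at this
        omega
      rw [Nat.div_mul_cancel hdvd, ZMod.natCast_val, ZMod.cast_id]
    · intro j hj
      rw [Finset.mem_range] at hj
      have hlt : j * w < v := by
        have := Nat.div_mul_cancel hw
        calc j * w < (v / w) * w := by
              exact (Nat.mul_lt_mul_right hw0).mpr hj
          _ = v := Nat.div_mul_cancel hw
      rw [ZMod.val_natCast_of_lt hlt, Nat.mul_div_cancel _ hw0]
  have h0A : (0 : ZMod v) ∈ A := by simp [hA]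
  -- T : pairs with equal residue
  set T : Finset (ZMod v × ZMod v) :=
    (D ×ˢ D).filter (fun p => φ p.1 = φ p.2) with hT
  -- Step 1: LHS natural version
  have step1 : ∑ i ∈ Finset.range w, (D.filter (fun d => d.val % w = i)).card ^ 2
      = T.card := by
    rw [hT, Finset.card_eq_sum_card_fiberwise
      (f := fun p => p.1.val % w) (t := Finset.range w)
      (fun p _ => Finset.mem_range.mpr (Nat.mod_lt _ hw0))]
    apply Finset.sum_congr rfl
    intro i _
    have : ((D ×ˢ D).filter (fun p => φ p.1 = φ p.2)).filter
        (fun p => p.1.val % w = i)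
        = (D.filter (fun d => d.val % w = i)) ×ˢ (D.filter (fun d => d.val % w = i)) := by
      ext ⟨a, b⟩
      simp only [Finset.mem_filter, Finset.mem_product]
      rw [hφeq]
      constructor
      · rintro ⟨⟨⟨ha, hb⟩, heq⟩, hi⟩
        exact ⟨⟨ha, hi⟩, ⟨hb, heq ▸ hi⟩⟩
      · rintro ⟨⟨ha, hi⟩, ⟨hb, hi'⟩⟩
        exact ⟨⟨⟨ha, hb⟩, by rw [hi, hi']⟩, hi⟩
    rw [this, Finset.card_product, sq]
  -- Step 2+3: T.card = sum over kernel
  have step2 : T.card = ∑ g ∈ A, ((D ×ˢ D).filter (fun p => p.1 - p.2 = g)).card := by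
    have hmem : ∀ p ∈ T, p.1 - p.2 ∈ A := by
      intro p hp
      rw [hT, Finset.mem_filter] at hp
      rw [hA, Finset.mem_filter]
      refine ⟨Finset.mem_univ _, ?_⟩
      rw [map_sub, hp.2, sub_self]
    rw [Finset.card_eq_sum_card_fiberwise hmem]
    apply Finset.sum_congr rfl
    intro g hg
    rw [hA, Finset.mem_filter] at hg
    congr 1
    rw [hT, Finset.filter_filter]
    apply Finset.filter_congr
    intro p hp
    constructor
    · exact fun h => h.2
    · intro h
      refine ⟨?_, h⟩
      have : φ (p.1 - p.2) = 0 := by rw [h]; exact hg.2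
      rw [map_sub, sub_eq_zero] at this
      exact this
  -- diagonal count
  have hdiag : ((D ×ˢ D).filter (fun p => p.1 - p.2 = (0 : ZMod v))).card = k := by
    have : (D ×ˢ D).filter (fun p => p.1 - p.2 = (0 : ZMod v))
        = D.image (fun d => (d, d)) := by
      ext ⟨a, b⟩
      simp only [Finset.mem_filter, Finset.mem_product, Finset.mem_image,
        sub_eq_zero, Prod.mk.injEq]
      constructor
      · rintro ⟨⟨ha, hb⟩, heq⟩
        exact ⟨a, ha, rfl, heq⟩
      · rintro ⟨d, hd, rfl, rfl⟩
        exact ⟨⟨hd, hd⟩, rfl⟩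
    rw [this, Finset.card_image_of_injective _ (fun a b h => (Prod.mk.injEq _ _ _ _ ▸ h).1),
      hcard]
  -- sum split
  have step4 : ∑ g ∈ A, ((D ×ˢ D).filter (fun p => p.1 - p.2 = g)).card
      = k + (v / w - 1) * l := by
    rw [← Finset.add_sum_erase _ _ h0A, hdiag]
    congr 1
    rw [Finset.sum_congr rfl (fun g hg => hdiff g (Finset.mem_erase.mp hg).1),
      Finset.sum_const, smul_eq_mul, Finset.card_erase_of_mem h0A, hAcard]
  have hvw : 1 ≤ v / w := Nat.one_le_div_iff hw0 |>.mpr (Nat.le_of_dvd (Nat.pos_of_ne_zero hv) hw)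
  have key : ∑ i ∈ Finset.range w, (D.filter (fun d => d.val % w = i)).card ^ 2
      = k + (v / w - 1) * l := by rw [step1, step2, step4]
  have : (∑ i ∈ Finset.range w, ((D.filter (fun d => d.val % w = i)).card : ℤ) ^ 2)
      = ((k + (v / w - 1) * l : ℕ) : ℤ) := by
    rw [← key]; push_cast; ring
  rw [this]
  push_cast [Nat.cast_sub hvw]
  ring
end

section
/- If v is even and a (v,k,λ) cyclic difference set exists, then n = k - λ is a perfect square. -/
theorem schutzenberger (v k l : ℕ) [NeZero v] (hv : Even v)
    (D : Finset (ZMod v))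
    (hcard : D.card = k)
    (hdiff : ∀ g : ZMod v, g ≠ 0 →
      ((D ×ˢ D).filter (fun p => p.1 - p.2 = g)).card = l) :
    ∃ m : ℤ, m * m = (k : ℤ) - l := by
  have h2 : 2 ∣ v := hv.two_dvd
  have hpar : ∀ d e : ZMod v, ((d - e).val) % 2 = (d.val + e.val) % 2 := by
    intro d e
    have h := ZMod.val_add (d - e) e
    rw [sub_add_cancel] at h
    have h' : d.val % 2 = ((d - e).val + e.val) % 2 := by
      rw [h]; exact Nat.mod_mod_of_dvd _ h2
    omega
  have key : ∀ d e : ZMod v, ((-1:ℤ))^((d - e).val) = (-1)^(d.val) * (-1)^(e.val) := by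
    intro d e
    rw [← pow_add, neg_one_pow_eq_pow_mod_two, hpar d e, ← neg_one_pow_eq_pow_mod_two]
  have hT : ∑ g : ZMod v, (-1:ℤ)^(g.val) = 0 := by
    have : ∑ g : ZMod v, (-1:ℤ)^(g.val) = ∑ i ∈ Finset.range v, (-1:ℤ)^i := by
      apply Finset.sum_nbij' (fun g : ZMod v => g.val) (fun i => (i : ZMod v))
      · intro g _; exact Finset.mem_range.mpr (ZMod.val_lt g)
      · intro i _; exact Finset.mem_univ _
      · intro g _; exact ZMod.natCast_rightInverse g
      · intro i hi; exact ZMod.val_natCast_of_lt (Finset.mem_range.mp hi)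
      · intro g _; rfl
    rw [this, neg_one_geom_sum, if_pos hv]
  refine ⟨∑ d ∈ D, (-1:ℤ)^(d.val), ?_⟩
  have step1 : (∑ d ∈ D, (-1:ℤ)^(d.val)) * (∑ d ∈ D, (-1:ℤ)^(d.val))
      = ∑ p ∈ D ×ˢ D, (-1:ℤ)^((p.1 - p.2).val) := by
    rw [Finset.sum_mul_sum, ← Finset.sum_product']
    exact Finset.sum_congr rfl fun p _ => (key p.1 p.2).symm
  have step2 : ∑ p ∈ D ×ˢ D, (-1:ℤ)^((p.1 - p.2).val)
      = ∑ g : ZMod v, (((D ×ˢ D).filter (fun p => p.1 - p.2 = g)).card : ℤ) * (-1)^(g.val) := by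
    rw [← Finset.sum_fiberwise (D ×ˢ D) (fun p => p.1 - p.2) (fun p => (-1:ℤ)^((p.1 - p.2).val))]
    refine Finset.sum_congr rfl fun g _ => ?_
    calc ∑ p ∈ (D ×ˢ D).filter (fun p => p.1 - p.2 = g), (-1:ℤ)^((p.1 - p.2).val)
        = ∑ p ∈ (D ×ˢ D).filter (fun p => p.1 - p.2 = g), (-1:ℤ)^(g.val) :=
          Finset.sum_congr rfl fun p hp => by rw [(Finset.mem_filter.mp hp).2]
      _ = _ := by rw [Finset.sum_const, nsmul_eq_mul]
  have hc0 : ((D ×ˢ D).filter (fun p => p.1 - p.2 = 0)).card = k := by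
    rw [← hcard]
    apply Finset.card_bij (fun p _ => p.1)
    · intro p hp; exact (Finset.mem_product.mp (Finset.mem_filter.mp hp).1).1
    · intro p hp q hq hpq
      have hp2 := sub_eq_zero.mp (Finset.mem_filter.mp hp).2
      have hq2 := sub_eq_zero.mp (Finset.mem_filter.mp hq).2
      exact Prod.ext hpq (by rw [← hp2, ← hq2, hpq])
    · intro d hd
      exact ⟨(d, d), Finset.mem_filter.mpr ⟨Finset.mem_product.mpr ⟨hd, hd⟩, sub_self d⟩, rfl⟩
  rw [step1, step2]
  have hsplit := Finset.sum_eq_sum_sdiff_singleton_add (Finset.mem_univ (0 : ZMod v))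
    (fun g => (((D ×ˢ D).filter (fun p => p.1 - p.2 = g)).card : ℤ) * (-1)^(g.val))
  rw [hsplit, hc0]
  have hrest : ∑ g ∈ Finset.univ \ {(0 : ZMod v)},
      (((D ×ˢ D).filter (fun p => p.1 - p.2 = g)).card : ℤ) * (-1)^(g.val)
      = ∑ g ∈ Finset.univ \ {(0 : ZMod v)}, (l : ℤ) * (-1)^(g.val) := by
    refine Finset.sum_congr rfl fun g hg => ?_
    have hg0 : g ≠ 0 := by
      simpa using (Finset.mem_sdiff.mp hg).2
    rw [hdiff g hg0]
  have hTm : ∑ g ∈ Finset.univ \ {(0 : ZMod v)}, (-1:ℤ)^(g.val) = -1 := by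
    have := Finset.sum_eq_sum_sdiff_singleton_add (Finset.mem_univ (0 : ZMod v))
      (fun g : ZMod v => (-1:ℤ)^(g.val))
    rw [hT] at this
    simp only [ZMod.val_zero, pow_zero] at this
    linarith
  rw [hrest, ← Finset.mul_sum, hTm, ZMod.val_zero, pow_zero]
  ring
end

section
/- Let D be a (v,k,1) planar cyclic difference set of order n = k − 1, and let t₁, t₂, t₃, t₄ be numerical multipliers of D with t₁ − t₂ ≡ t₃ − t₄ (mod v) and (t₁,t₂) ≠ (t₃,t₄) as suitable. Then v divides lcm(t₁ − t₂, t₁ − t₃). -/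
/-!
Let `k = #D` and `S = ∑ d ∈ D, d`. Counting differences gives `k² = k + v - 1`, so `k` is a unit
mod `v`. Summing `t • D = D + s` gives `k s = (t - 1) S`, so the translate `E = D + c` with
`k c = -S` satisfies `t • E = E` for every multiplier `t`. For `x ∈ E` the pairs `(t₁x, t₂x)` and
`(t₃x, t₄x)` of elements of `E` have the same difference `(t₁ - t₂)x`, so by uniqueness of
representations either it vanishes or `t₁x = t₃x`. Hence `lcm (t₁ - t₂) (t₁ - t₃)` annihilates
`E`, therefore every difference of elements of `E`, in particular `1`.
-/

open Finset

section DifferenceSet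

variable {G : Type*} [AddCommGroup G] [DecidableEq G]

def IsPlanarDifferenceSet (D : Finset G) : Prop :=
  ∀ g : G, g ≠ 0 → ((D ×ˢ D).filter (fun p => p.1 - p.2 = g)).card = 1

namespace IsPlanarDifferenceSet

variable {D : Finset G}

theorem eq_of_sub_eq {x y x' y' : G} (hD : IsPlanarDifferenceSet D)
    (hx : x ∈ D) (hy : y ∈ D) (hx' : x' ∈ D) (hy' : y' ∈ D)
    (hne : x - y ≠ 0) (h : x - y = x' - y') : x = x' := by
  have hxy : (x, y) ∈ (D ×ˢ D).filter (fun p => p.1 - p.2 = x - y) := by simp [hx, hy]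
  have hxy' : (x', y') ∈ (D ×ˢ D).filter (fun p => p.1 - p.2 = x - y) := by simp [hx', hy', h]
  exact congrArg Prod.fst (card_le_one.mp (hD _ hne).le _ hxy _ hxy')

theorem exists_sub_eq (hD : IsPlanarDifferenceSet D) {g : G} (hg : g ≠ 0) :
    ∃ x ∈ D, ∃ y ∈ D, x - y = g := by
  obtain ⟨⟨x, y⟩, hp⟩ := card_pos.mp ((hD g hg).symm ▸ Nat.one_pos)
  simp only [mem_filter, mem_product] at hp
  exact ⟨x, hp.1.1, y, hp.1.2, hp.2⟩

theorem image_add_right (hD : IsPlanarDifferenceSet D) (c : G) :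
    IsPlanarDifferenceSet (D.image (· + c)) := by
  intro g hg
  rw [← hD g hg]
  refine card_bij (fun p _ => (p.1 - c, p.2 - c)) ?_ ?_ ?_
  · simp +contextual [← sub_eq_add_neg]
  · simp +contextual
  · intro p hp
    refine ⟨(p.1 + c, p.2 + c), ?_, by simp⟩
    simpa using hp

theorem card_mul_card_add_one [Fintype G] (hD : IsPlanarDifferenceSet D) :
    #D * #D + 1 = #D + Fintype.card G := by
  have hfib := card_eq_sum_card_fiberwise (f := fun p : G × G => p.1 - p.2) (s := D ×ˢ D)
    (t := univ) (fun _ _ => mem_univ _)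
  rw [card_product, ← add_sum_erase _ _ (mem_univ 0),
    sum_congr rfl (fun g hg => hD g (ne_of_mem_erase hg))] at hfib
  have hdiag : (D ×ˢ D).filter (fun p => p.1 - p.2 = 0) = D.image (fun d => (d, d)) := by
    ext ⟨x, y⟩
    simp only [mem_filter, mem_product, sub_eq_zero, mem_image, Prod.mk.injEq]
    constructor
    · rintro ⟨⟨hx, -⟩, rfl⟩
      exact ⟨x, hx, rfl, rfl⟩
    · rintro ⟨d, hd, rfl, rfl⟩
      exact ⟨⟨hd, hd⟩, rfl⟩
  rw [hdiag, card_image_of_injective _ (fun a b h => congrArg Prod.fst h), sum_const,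
    card_erase_of_mem (mem_univ 0), card_univ, smul_eq_mul, mul_one] at hfib
  have : 0 < Fintype.card G := Fintype.card_pos
  omega

end IsPlanarDifferenceSet

end DifferenceSet

section Multiplier

variable {R : Type*} [CommRing R] [DecidableEq R] {D : Finset R}

theorem IsPlanarDifferenceSet.isUnit_card [Fintype R] (hD : IsPlanarDifferenceSet D) :
    IsUnit (#D : R) := by
  have h := congrArg (Nat.cast : ℕ → R) hD.card_mul_card_add_one
  push_cast at h
  rw [Nat.cast_card_eq_zero, add_zero] at h
  exact IsUnit.of_mul_eq_one (1 - #D : R) (by linear_combination -h)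

theorem mul_sum_eq_sum_add_card_mul {t s : R} (ht : IsUnit t)
    (h : D.image (t * ·) = D.image (· + s)) :
    t * ∑ d ∈ D, d = ∑ d ∈ D, d + #D * s := by
  have hsum := congrArg (fun E => ∑ x ∈ E, x) h
  rw [sum_image (fun x _ y _ => ht.mul_left_cancel), sum_image (fun x _ y _ => add_right_cancel),
    sum_add_distrib, sum_const, nsmul_eq_mul, ← mul_sum] at hsum
  exact hsum

theorem image_mul_image_add_eq {t s c : R} (ht : IsUnit t) (hk : IsUnit (#D : R))
    (hc : #D * c = -∑ d ∈ D, d) (h : D.image (t * ·) = D.image (· + s)) :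
    (D.image (· + c)).image (t * ·) = D.image (· + c) := by
  have hs : s + t * c = c := by
    refine hk.mul_left_cancel ?_
    linear_combination (t - 1) * hc - mul_sum_eq_sum_add_card_mul ht h
  calc (D.image (· + c)).image (t * ·) = (D.image (t * ·)).image (· + t * c) := by
        simp only [image_image]; congr 1; funext d; simp [mul_add]
    _ = D.image (· + c) := by
        rw [h, image_image]; congr 1; funext d; simp [add_assoc, hs]

theorem IsPlanarDifferenceSet.sub_mul_eq_zero_or_sub_mul_eq_zero {E : Finset R}
    (hE : IsPlanarDifferenceSet E) {t₁ t₂ t₃ t₄ : R} (h₁ : Set.MapsTo (t₁ * ·) E E)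
    (h₂ : Set.MapsTo (t₂ * ·) E E) (h₃ : Set.MapsTo (t₃ * ·) E E)
    (h₄ : Set.MapsTo (t₄ * ·) E E) (h : t₁ - t₂ = t₃ - t₄) {x : R} (hx : x ∈ E) :
    (t₁ - t₂) * x = 0 ∨ (t₁ - t₃) * x = 0 := by
  refine or_iff_not_imp_left.mpr fun h0 => ?_
  have : t₁ * x = t₃ * x := hE.eq_of_sub_eq (h₁ hx) (h₂ hx) (h₃ hx) (h₄ hx) (by rwa [← sub_mul])
    (by rw [← sub_mul, ← sub_mul, h])
  rw [sub_mul, this, sub_self]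

theorem IsPlanarDifferenceSet.eq_zero_of_forall_mul_eq_zero {E : Finset R}
    (hE : IsPlanarDifferenceSet E) {r : R} (h : ∀ x ∈ E, r * x = 0) : r = 0 := by
  by_cases h1 : (1 : R) = 0
  · rw [← mul_one r, h1, mul_zero]
  obtain ⟨x, hx, y, hy, hxy⟩ := hE.exists_sub_eq h1
  rw [← mul_one r, ← hxy, mul_sub, h x hx, h y hy, sub_zero]

end Multiplier

theorem evans_mann_general (v : ℕ) [NeZero v] (D : Finset (ZMod v))
    (hdiff : ∀ g : ZMod v, g ≠ 0 →
      ((D ×ˢ D).filter (fun p => p.1 - p.2 = g)).card = 1)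
    (t₁ t₂ t₃ t₄ : ℤ)
    (hmult : ∀ t ∈ ({t₁, t₂, t₃, t₄} : Set ℤ), Int.gcd t v = 1 ∧
      ∃ s : ZMod v, D.image (fun d => (t : ZMod v) * d)
        = D.image (fun d => d + s))
    (hcong : (v : ℤ) ∣ (t₁ - t₂) - (t₃ - t₄)) :
    (v : ℤ) ∣ lcm (t₁ - t₂) (t₁ - t₃) := by
  have hD : IsPlanarDifferenceSet D := hdiff
  have hk := hD.isUnit_card
  obtain ⟨u, hu⟩ := hk.exists_right_inv
  set c := u * -∑ d ∈ D, d
  have hE := hD.image_add_right c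
  have hfix : ∀ t ∈ ({t₁, t₂, t₃, t₄} : Set ℤ),
      Set.MapsTo ((t : ZMod v) * ·) (D.image (· + c)) (D.image (· + c)) := by
    intro t ht x hx
    obtain ⟨hgcd, s, hs⟩ := hmult t ht
    have htu : IsUnit (t : ZMod v) := (ZMod.coe_int_isUnit_iff_isCoprime t v).mpr
      (Int.isCoprime_iff_gcd_eq_one.mpr ((Int.gcd_comm _ _).trans hgcd))
    rw [← image_mul_image_add_eq htu hk (by rw [← mul_assoc, hu, one_mul]) hs]
    exact mem_image_of_mem _ hx
  have hcong' : (t₁ : ZMod v) - t₂ = t₃ - t₄ := by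
    have := (ZMod.intCast_zmod_eq_zero_iff_dvd _ v).mpr hcong
    push_cast at this
    exact sub_eq_zero.mp this
  refine (ZMod.intCast_zmod_eq_zero_iff_dvd _ v).mp
    (hE.eq_zero_of_forall_mul_eq_zero fun x hx => ?_)
  rcases hE.sub_mul_eq_zero_or_sub_mul_eq_zero (hfix t₁ (by simp)) (hfix t₂ (by simp))
    (hfix t₃ (by simp)) (hfix t₄ (by simp)) hcong' hx with h | h
  · obtain ⟨m, hm⟩ := dvd_lcm_left (t₁ - t₂) (t₁ - t₃)
    rw [hm, Int.cast_mul, mul_right_comm, Int.cast_sub, h, zero_mul]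
  · obtain ⟨m, hm⟩ := dvd_lcm_right (t₁ - t₂) (t₁ - t₃)
    rw [hm, Int.cast_mul, mul_right_comm, Int.cast_sub, h, zero_mul]

theorem evans_mann (v k : ℕ) [NeZero v] (D : Finset (ZMod v))
    (hcard : D.card = k)
    (hdiff : ∀ g : ZMod v, g ≠ 0 →
      ((D ×ˢ D).filter (fun p => p.1 - p.2 = g)).card = 1)
    (t₁ t₂ t₃ t₄ : ℤ)
    (hmult : ∀ t ∈ ({t₁, t₂, t₃, t₄} : Set ℤ), Int.gcd t v = 1 ∧
      ∃ s : ZMod v, D.image (fun d => (t : ZMod v) * d)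
        = D.image (fun d => d + s))
    (hcong : (v : ℤ) ∣ (t₁ - t₂) - (t₃ - t₄))
    (hne : (t₁, t₂) ≠ (t₃, t₄)) :
    (v : ℤ) ∣ lcm (t₁ - t₂) (t₁ - t₃) :=
  evans_mann_general v D hdiff t₁ t₂ t₃ t₄ hmult hcong
end

section
/- If D is a (v,k,λ) cyclic difference set, w | v, and p is a prime dividing n = k − λ exactly once (p² ∤ n), w > 1, and there exists j with p^j ≡ −1 (mod w), then no such D exists (Mann's test). Formally: there is no (v,k,λ) cyclic difference set under these hypotheses. -/
open Polynomial Finset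

private lemma mann_pow_mod {R : Type*} [Monoid R] {θ : R} {w : ℕ} (h : θ ^ w = 1) (m : ℕ) :
    θ ^ m = θ ^ (m % w) := by
  conv_lhs => rw [← Nat.div_add_mod m w]
  rw [pow_add, pow_mul, h, one_pow, one_mul]

private lemma mann_pow_eq_of_modEq {R : Type*} [Monoid R] {θ : R} {w : ℕ} (h : θ ^ w = 1)
    {a b : ℕ} (hab : a ≡ b [MOD w]) : θ ^ a = θ ^ b := by
  rw [mann_pow_mod h a, mann_pow_mod h b, Nat.ModEq] at *
  rw [hab]

private lemma mann_root_pow {S : Type*} [CommRing S] (w : ℕ) :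
    (AdjoinRoot.root (cyclotomic w S)) ^ w = 1 := by
  obtain ⟨q, hq⟩ := Polynomial.cyclotomic.dvd_X_pow_sub_one w S
  have h0 : (aeval (AdjoinRoot.root (cyclotomic w S))) ((X : S[X]) ^ w - 1) = 0 := by
    rw [AdjoinRoot.aeval_eq, hq, map_mul, AdjoinRoot.mk_self, zero_mul]
  simp only [map_sub, map_pow, aeval_X, map_one, sub_eq_zero] at h0
  exact h0

private lemma mann_root_geom {S : Type*} [CommRing S] (w : ℕ) (hw1 : 1 < w) :
    ∑ i ∈ Finset.range w, (AdjoinRoot.root (cyclotomic w S)) ^ i = 0 := by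
  obtain ⟨q, hq⟩ := Polynomial.cyclotomic_dvd_geom_sum_of_dvd S (dvd_refl w)
    (by omega : w ≠ 1)
  have h0 : (aeval (AdjoinRoot.root (cyclotomic w S)))
      (∑ i ∈ Finset.range w, (X : S[X]) ^ i) = 0 := by
    rw [AdjoinRoot.aeval_eq, hq, map_mul, AdjoinRoot.mk_self, zero_mul]
  simpa only [map_sum, map_pow, aeval_X] using h0

private lemma mann_mk_C_eq_zero {S : Type*} [CommRing S] [Nontrivial S] {f : S[X]}
    (hf : f.Monic) (hdeg : 0 < f.degree) {c : S}
    (h : AdjoinRoot.mk f (C c) = 0) : c = 0 := by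
  obtain ⟨q, hq⟩ := AdjoinRoot.mk_eq_zero.mp h
  rcases eq_or_ne q 0 with rfl | hq0
  · rw [mul_zero] at hq
    exact C_eq_zero.mp hq
  · exfalso
    have hd : (f * q).degree = f.degree + q.degree :=
      degree_mul' (by rw [hf.leadingCoeff, one_mul]; exact leadingCoeff_ne_zero.mpr hq0)
    have h1 : (C c).degree ≤ 0 := degree_C_le
    rw [hq, hd] at h1
    have h2 : (0 : WithBot ℕ) ≤ q.degree := zero_le_degree_iff.mpr hq0
    exact absurd h1 (not_le.mpr (lt_of_lt_of_le hdeg (le_add_of_nonneg_right h2)))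

private lemma mann_zmod_sq_lift {p : ℕ} (hp : p.Prime) (b : ZMod (p ^ 2))
    (hb : ZMod.castHom (dvd_pow_self p two_ne_zero) (ZMod p) b = 0) :
    (p : ZMod (p ^ 2)) ∣ b := by
  haveI : NeZero (p ^ 2) := ⟨pow_ne_zero _ hp.pos.ne'⟩
  have h1 : ((b.val : ℕ) : ZMod p) = 0 := by
    rw [ZMod.natCast_val]
    rwa [ZMod.castHom_apply] at hb
  have h2 : p ∣ b.val := (ZMod.natCast_eq_zero_iff _ _).mp h1
  obtain ⟨c, hc⟩ := h2
  refine ⟨(c : ZMod (p ^ 2)), ?_⟩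
  have hb' : ((b.val : ℕ) : ZMod (p ^ 2)) = b := by rw [ZMod.natCast_val, ZMod.cast_id]
  rw [← hb', hc, Nat.cast_mul]

theorem mann_test (v k l n w p : ℕ) [NeZero v] [NeZero w]
    (hn : k = l + n)
    (hw : w ∣ v) (hw1 : 1 < w)
    (hp : p.Prime) (hpn : p ∣ n) (hp2 : ¬ p ^ 2 ∣ n)
    (hj : ∃ j : ℕ, (p : ZMod w) ^ j = -1) :
    ¬ ∃ D : Finset (ZMod v), D.card = k ∧
      ∀ g : ZMod v, g ≠ 0 →
        ((D ×ˢ D).filter (fun pr => pr.1 - pr.2 = g)).card = l := by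
  rintro ⟨D, hcard, hdiff⟩
  obtain ⟨j, hj⟩ := hj
  haveI : Fact p.Prime := ⟨hp⟩
  haveI : NeZero (p ^ 2) := ⟨pow_ne_zero _ hp.pos.ne'⟩
  haveI : Fact (1 < p ^ 2) := ⟨by have := hp.two_le; nlinarith⟩
  set g2 : (ZMod (p ^ 2))[X] := cyclotomic w (ZMod (p ^ 2)) with hg2
  set g1 : (ZMod p)[X] := cyclotomic w (ZMod p) with hg1
  set θ : AdjoinRoot g2 := AdjoinRoot.root g2 with hθ
  set θb : AdjoinRoot g1 := AdjoinRoot.root g1 with hθb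
  have hθw : θ ^ w = 1 := mann_root_pow w
  have hθbw : θb ^ w = 1 := mann_root_pow w
  set ψ : ZMod v →+* ZMod w := ZMod.castHom hw (ZMod w) with hψ
  set Fc : ZMod v → AdjoinRoot g2 := fun gg => θ ^ (ψ gg).val with hFc
  have hFmul : ∀ a b : ZMod v, Fc a * Fc b = Fc (a + b) := by
    intro a b
    show θ ^ _ * θ ^ _ = θ ^ _
    rw [← pow_add, map_add, ZMod.val_add, ← mann_pow_mod hθw]
  have hF0 : Fc 0 = 1 := by
    show θ ^ _ = 1
    rw [map_zero, ZMod.val_zero, pow_zero]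
  set α : AdjoinRoot g2 := ∑ d ∈ D, Fc d with hα
  set β : AdjoinRoot g2 := ∑ d ∈ D, Fc (-d) with hβ
  set S : AdjoinRoot g2 := ∑ gg : ZMod v, Fc gg with hS
  -- Step 1 : α * β = n + l • S
  have h1 : α * β = ∑ pr ∈ D ×ˢ D, Fc (pr.1 - pr.2) := by
    rw [hα, hβ, Finset.sum_mul_sum, ← Finset.sum_product']
    exact Finset.sum_congr rfl fun pr _ => by rw [hFmul, sub_eq_add_neg]
  have h2 : α * β = ∑ gg : ZMod v,
      ((D ×ˢ D).filter fun pr => pr.1 - pr.2 = gg).card • Fc gg := by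
    rw [h1, ← Finset.sum_fiberwise (D ×ˢ D) (fun pr => pr.1 - pr.2) (fun pr => Fc (pr.1 - pr.2))]
    refine Finset.sum_congr rfl fun gg _ => ?_
    rw [Finset.sum_congr rfl (fun pr hpr => congrArg Fc (Finset.mem_filter.mp hpr).2),
      Finset.sum_const]
  have hdiag : ((D ×ˢ D).filter fun pr => pr.1 - pr.2 = (0 : ZMod v)).card = k := by
    rw [← hcard]
    apply Finset.card_bij (fun pr _ => pr.1)
    · intro pr hpr
      exact (Finset.mem_product.mp (Finset.mem_filter.mp hpr).1).1
    · intro pr hpr pr' hpr' h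
      have e1 := sub_eq_zero.mp (Finset.mem_filter.mp hpr).2
      have e2 := sub_eq_zero.mp (Finset.mem_filter.mp hpr').2
      exact Prod.ext h (by rw [← e1, ← e2, h])
    · intro d hd
      exact ⟨(d, d), Finset.mem_filter.mpr ⟨Finset.mem_product.mpr ⟨hd, hd⟩, sub_self d⟩, rfl⟩
  have h3 : α * β = (n : AdjoinRoot g2) + l • S := by
    have e1 : α * β = k • (1 : AdjoinRoot g2)
        + ∑ gg ∈ Finset.univ.erase (0 : ZMod v), l • Fc gg := by
      rw [h2, ← Finset.add_sum_erase Finset.univ _ (Finset.mem_univ (0 : ZMod v)), hdiag, hF0]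
      congr 1
      exact Finset.sum_congr rfl fun gg hgg => by
        rw [hdiff gg (Finset.mem_erase.mp hgg).1]
    have e2 : S = 1 + ∑ gg ∈ Finset.univ.erase (0 : ZMod v), Fc gg := by
      rw [hS, ← Finset.add_sum_erase Finset.univ _ (Finset.mem_univ (0 : ZMod v)), hF0]
    rw [e1, ← Finset.smul_sum, e2, hn]
    simp only [smul_add, add_smul, nsmul_eq_mul, mul_one, Nat.cast_add]
    ring
  -- Step 2 : S = 0
  have hψval : ∀ t : ZMod w, ψ ((t.val : ℕ) : ZMod v) = t := by
    intro t
    rw [map_natCast, ZMod.natCast_val, ZMod.cast_id]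
  have hfib : ∀ t : ZMod w,
      (Finset.univ.filter fun gg : ZMod v => ψ gg = (0 : ZMod w)).card
      = (Finset.univ.filter fun gg : ZMod v => ψ gg = t).card := by
    intro t
    apply Finset.card_bij (fun gg _ => gg + ((t.val : ℕ) : ZMod v))
    · intro a ha
      have := (Finset.mem_filter.mp ha).2
      refine Finset.mem_filter.mpr ⟨Finset.mem_univ _, ?_⟩
      rw [map_add, this, hψval, zero_add]
    · intro a _ b _ h
      exact add_right_cancel h
    · intro b hb
      have hbt := (Finset.mem_filter.mp hb).2
      refine ⟨b - ((t.val : ℕ) : ZMod v), Finset.mem_filter.mpr ⟨Finset.mem_univ _, ?_⟩, by ring⟩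
      rw [map_sub, hbt, hψval, sub_self]
  have hT : ∑ t : ZMod w, θ ^ t.val = 0 := by
    rw [← mann_root_geom w hw1 (S := ZMod (p ^ 2))]
    refine Finset.sum_nbij' (i := fun t : ZMod w => t.val) (j := fun i : ℕ => (i : ZMod w))
      ?_ ?_ ?_ ?_ ?_
    · intro t _; exact Finset.mem_range.mpr (ZMod.val_lt t)
    · intro i _; exact Finset.mem_univ _
    · intro t _
      show ((t.val : ℕ) : ZMod w) = t
      rw [ZMod.natCast_val, ZMod.cast_id]
    · intro i hi
      show ((i : ZMod w)).val = i
      rw [ZMod.val_natCast_of_lt (Finset.mem_range.mp hi)]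
    · intro t _; rfl
  have hSzero : S = 0 := by
    rw [hS, ← Finset.sum_fiberwise Finset.univ (fun gg : ZMod v => ψ gg) (fun gg => Fc gg)]
    have : ∀ t : ZMod w, ∑ gg ∈ Finset.univ.filter (fun gg : ZMod v => ψ gg = t), Fc gg
        = (Finset.univ.filter fun gg : ZMod v => ψ gg = (0 : ZMod w)).card • θ ^ t.val := by
      intro t
      rw [Finset.sum_congr rfl (fun gg hgg => ?_), Finset.sum_const, hfib t]
      show θ ^ (ψ gg).val = θ ^ t.val
      rw [(Finset.mem_filter.mp hgg).2]
    rw [Finset.sum_congr rfl fun t _ => this t, ← Finset.smul_sum, hT, smul_zero]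
  have hαβ : α * β = (n : AdjoinRoot g2) := by rw [h3, hSzero, smul_zero, add_zero]
  -- Step 3 : the reduction map φ
  have hcastmap : g2.map (ZMod.castHom (dvd_pow_self p two_ne_zero) (ZMod p)) = g1 :=
    map_cyclotomic w _
  have hroot0 : Polynomial.eval₂
      ((AdjoinRoot.of g1).comp (ZMod.castHom (dvd_pow_self p two_ne_zero) (ZMod p))) θb g2 = 0 := by
    rw [← Polynomial.eval₂_map, hcastmap]
    exact AdjoinRoot.eval₂_root g1
  set φ : AdjoinRoot g2 →+* AdjoinRoot g1 := AdjoinRoot.lift _ θb hroot0 with hφ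
  have hφθ : φ θ = θb := AdjoinRoot.lift_root _
  have hφmk : ∀ B : (ZMod (p ^ 2))[X], φ (AdjoinRoot.mk g2 B)
      = AdjoinRoot.mk g1 (B.map (ZMod.castHom (dvd_pow_self p two_ne_zero) (ZMod p))) := by
    intro B
    rw [hφ, AdjoinRoot.lift_mk, ← AdjoinRoot.aeval_eq, aeval_def, Polynomial.eval₂_map,
      AdjoinRoot.algebraMap_eq]
  -- nontrivial & char p
  have hg1monic : g1.Monic := cyclotomic.monic w _
  have hg1deg : 0 < g1.degree := by
    rw [hg1, degree_cyclotomic]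
    exact_mod_cast Nat.totient_pos.mpr (by omega : 0 < w)
  haveI : Nontrivial (AdjoinRoot g1) := by
    refine ⟨1, 0, fun h => one_ne_zero (α := ZMod p) ?_⟩
    refine mann_mk_C_eq_zero hg1monic hg1deg (c := 1) ?_
    rw [map_one, map_one, h]
  haveI : CharP (AdjoinRoot g1) p :=
    charP_of_injective_ringHom (AdjoinRoot.of g1).injective p
  -- Step 4 : squarefreeness of g1
  have hsq : Squarefree g1 := by
    refine Polynomial.Separable.squarefree ?_
    by_cases hpw : p ∣ w
    · have hwdvd : w ∣ p ^ j + 1 := by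
        have : ((p ^ j + 1 : ℕ) : ZMod w) = 0 := by push_cast [hj]; ring
        exact (ZMod.natCast_eq_zero_iff _ _).mp this
      rcases Nat.eq_zero_or_pos j with rfl | hj1
      · have hw2 : w = 2 := by
          have := Nat.le_of_dvd (by norm_num) hwdvd
          simp only [pow_zero] at this hwdvd ⊢
          omega
        rw [hg1, hw2, cyclotomic_two]
        simpa using separable_X_add_C (1 : ZMod p)
      · exfalso
        have h1 : p ∣ p ^ j + 1 := hpw.trans hwdvd
        have h2 : p ∣ p ^ j := dvd_pow_self p hj1.ne'
        have h3 : p ∣ 1 := (Nat.dvd_add_right h2).mp h1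
        have h4 := Nat.dvd_one.mp h3
        have := hp.two_le
        omega
    · have hw0 : ((w : ZMod p)) ≠ 0 := fun h => hpw ((ZMod.natCast_eq_zero_iff _ _).mp h)
      exact Separable.of_dvd (X_pow_sub_one_separable_iff.mpr hw0)
        (cyclotomic.dvd_X_pow_sub_one w _)
  -- Step 5 : Frobenius argument, φ α = 0 and φ β = 0
  have hφα : φ α = ∑ d ∈ D, θb ^ (ψ d).val := by
    rw [hα, map_sum]
    exact Finset.sum_congr rfl fun d _ => by rw [hFc]; simp only [map_pow, hφθ]
  have hφβ : φ β = ∑ d ∈ D, θb ^ (ψ (-d)).val := by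
    rw [hβ, map_sum]
    exact Finset.sum_congr rfl fun d _ => by rw [hFc]; simp only [map_pow, hφθ]
  have hfrob : φ β = (φ α) ^ p ^ j := by
    rw [hφα, sum_pow_char_pow, hφβ]
    refine Finset.sum_congr rfl fun d _ => ?_
    rw [← pow_mul]
    refine mann_pow_eq_of_modEq hθbw ?_
    refine (ZMod.natCast_eq_natCast_iff _ _ _).mp ?_
    push_cast [ZMod.natCast_val, ZMod.cast_id]
    rw [map_neg, hj]
    ring
  have hφαβ : φ α * φ β = 0 := by
    rw [← map_mul, hαβ, map_natCast]
    exact (CharP.cast_eq_zero_iff (AdjoinRoot g1) p n).mpr hpn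
  have hφα0 : φ α = 0 := by
    obtain ⟨A, hA⟩ := AdjoinRoot.mk_surjective (φ α)
    have hpow : AdjoinRoot.mk g1 (A ^ (p ^ j + 1)) = 0 := by
      rw [map_pow, hA, pow_succ, ← hfrob, mul_comm, hφαβ]
    have hdvd := AdjoinRoot.mk_eq_zero.mp hpow
    rw [← hA, AdjoinRoot.mk_eq_zero]
    exact (hsq.dvd_pow_iff_dvd (by positivity)).mp hdvd
  have hφβ0 : φ β = 0 := by
    rw [hfrob, hφα0, zero_pow (pow_ne_zero _ hp.pos.ne')]
  -- Step 6 : lift to AdjoinRoot g2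
  have hlift : ∀ x : AdjoinRoot g2, φ x = 0 →
      ∃ y : AdjoinRoot g2, x = (p : AdjoinRoot g2) * y := by
    intro x hx
    obtain ⟨A, rfl⟩ := AdjoinRoot.mk_surjective x
    rw [hφmk] at hx
    obtain ⟨Qb, hQb⟩ := AdjoinRoot.mk_eq_zero.mp hx
    have hsurj : Function.Surjective (ZMod.castHom (dvd_pow_self p two_ne_zero) (ZMod p)) := by
      intro t
      exact ⟨((t.val : ℕ) : ZMod (p ^ 2)), by rw [map_natCast, ZMod.natCast_val, ZMod.cast_id]⟩
    obtain ⟨Q, hQ⟩ := Polynomial.map_surjective _ hsurj Qb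
    have hker : (A - g2 * Q).map (ZMod.castHom (dvd_pow_self p two_ne_zero) (ZMod p)) = 0 := by
      rw [Polynomial.map_sub, Polynomial.map_mul, hQ, hcastmap, ← hQb, sub_self]
    have hdvd : Polynomial.C ((p : ZMod (p ^ 2))) ∣ (A - g2 * Q) := by
      rw [Polynomial.C_dvd_iff_dvd_coeff]
      intro i
      apply mann_zmod_sq_lift hp
      rw [← Polynomial.coeff_map, hker, Polynomial.coeff_zero]
    obtain ⟨B, hB⟩ := hdvd
    refine ⟨AdjoinRoot.mk g2 B, ?_⟩
    have hA2 : A = g2 * Q + Polynomial.C ((p : ZMod (p ^ 2))) * B := by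
      rw [← hB]; ring
    rw [hA2, map_add, map_mul, AdjoinRoot.mk_self, zero_mul, zero_add, map_mul,
      AdjoinRoot.mk_C, map_natCast]
  obtain ⟨a, ha⟩ := hlift α hφα0
  obtain ⟨b, hb⟩ := hlift β hφβ0
  -- Step 7 : conclude p^2 ∣ n
  have hp2R : (p : AdjoinRoot g2) * (p : AdjoinRoot g2) = 0 := by
    rw [← Nat.cast_mul, ← pow_two, ← map_natCast (AdjoinRoot.of g2), ZMod.natCast_self, map_zero]
  have hn0 : (n : AdjoinRoot g2) = 0 := by
    rw [← hαβ, ha, hb, show (p : AdjoinRoot g2) * a * ((p : AdjoinRoot g2) * b)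
      = ((p : AdjoinRoot g2) * (p : AdjoinRoot g2)) * (a * b) by ring, hp2R, zero_mul]
  have hg2monic : g2.Monic := cyclotomic.monic w _
  have hg2deg : 0 < g2.degree := by
    rw [hg2, degree_cyclotomic]
    exact_mod_cast Nat.totient_pos.mpr (by omega : 0 < w)
  have hnz : ((n : ℕ) : ZMod (p ^ 2)) = 0 := by
    refine mann_mk_C_eq_zero hg2monic hg2deg ?_
    rw [AdjoinRoot.mk_C, map_natCast, hn0]
  exact hp2 ((ZMod.natCast_eq_zero_iff _ _).mp hnz)
end
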